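/- Let L be the combinatorial Laplacian of a weighted graph G on N vertices, C ∈ ℝ^{n×N} a coarsening matrix with Π = Cᵀ C, and L̃ = C L Cᵀ. Suppose λ_1 = 0, Π x_1 = x_1, C x_1 = x̃_1, and fix k with 2 ≤ k ≤ n − 1 and constants ε_2,…,ε_k ≥ 0 such that x_iᵀ Π L Π x_i ≤ (1 + ε_i) λ_i for all 2 ≤ i ≤ k. If λ̃_{k+1} > λ_2, then the quantity ϑ_k := Σ_{i=1}^{k} Σ_{j=k+1}^{n} (x̃_jᵀ C x_i)² satisfies ϑ_k ≤ Σ_{i=2}^{k} ( (1 + ε_i) λ_i − λ_2 ‖Π x_i‖₂² ) / ( λ̃_{k+1} − λ_2 ). -/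

import Mathlib

/-! Expand `C x_i` in the eigenbasis `x̃_j` of `L̃ = C L Cᵀ`, with coefficients `c_j`. Parseval and
the spectral decomposition of `L̃` give `∑ c_j² = ‖Π x_i‖²` and
`∑ λ̃_j c_j² = (Π x_i)ᵀ L (Π x_i) ≤ (1 + ε_i) λ_i`. For `i ≥ 2` the coefficient `c_1` vanishes
because `Π x_1 = x_1`, and every `λ̃_j` with `j ≥ 2` is at least `λ_2`, since `Cᵀ x̃_j` is a unit
vector orthogonal to `x_1 = Cᵀ x̃_1`. Hence
`(λ̃_{k+1} − λ_2) ∑_{j>k} c_j² ≤ ∑_j (λ̃_j − λ_2) c_j² ≤ (1 + ε_i) λ_i − λ_2 ‖Π x_i‖²`.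
Summing over `i` gives the bound; the term `i = 1` is zero because `C x_1 = x̃_1`. -/

open Matrix

/-- The combinatorial Laplacian `L = D - W`. -/
def lap {N : ℕ} (W : Matrix (Fin N) (Fin N) ℝ) : Matrix (Fin N) (Fin N) ℝ :=
  Matrix.diagonal (fun i => ∑ j, W i j) - W

/-- `W` is the weight matrix of a weighted graph: symmetric, nonnegative, zero diagonal. -/
def IsWeightedGraph {N : ℕ} (W : Matrix (Fin N) (Fin N) ℝ) : Prop :=
  (∀ i j, W i j = W j i) ∧ (∀ i j, 0 ≤ W i j) ∧ (∀ i, W i i = 0)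

/-- A coarsening matrix `C : ℝ^{n×N}`. -/
def IsCoarsening {n N : ℕ} (C : Matrix (Fin n) (Fin N) ℝ) : Prop :=
  ∃ φ : Fin N → Fin n, Function.Surjective φ ∧
    ∀ i j, C i j =
      if φ j = i then
        (Real.sqrt ((Finset.univ.filter (fun j' : Fin N => φ j' = i)).card : ℝ))⁻¹
      else 0

open Finset

section Orthonormal

variable {ι : Type*} [Fintype ι] [DecidableEq ι] {u : ι → ι → ℝ}

theorem sum_dotProduct_mul_dotProduct_of_orthonormal
    (hu : ∀ i j, u i ⬝ᵥ u j = if i = j then 1 else 0) (v w : ι → ℝ) :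
    ∑ j, (u j ⬝ᵥ v) * (u j ⬝ᵥ w) = v ⬝ᵥ w := by
  have hU : of u * (of u)ᵀ = 1 := by
    ext i j
    simpa [mul_apply, one_apply, dotProduct] using hu i j
  calc ∑ j, (u j ⬝ᵥ v) * (u j ⬝ᵥ w) = (of u *ᵥ w) ⬝ᵥ (of u *ᵥ v) := by
        simp only [dotProduct, mulVec, of_apply, mul_comm]
    _ = v ⬝ᵥ (((of u)ᵀ * of u) *ᵥ w) := by
        rw [← mulVec_mulVec, dotProduct_transpose_mulVec]
    _ = v ⬝ᵥ w := by rw [mul_eq_one_comm.mp hU, one_mulVec]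

theorem sum_dotProduct_sq_of_orthonormal
    (hu : ∀ i j, u i ⬝ᵥ u j = if i = j then 1 else 0) (v : ι → ℝ) :
    ∑ j, (u j ⬝ᵥ v) ^ 2 = v ⬝ᵥ v := by
  simpa only [sq] using sum_dotProduct_mul_dotProduct_of_orthonormal hu v v

variable {M : Matrix ι ι ℝ} {μ : ι → ℝ}

theorem dotProduct_mulVec_eq_sum_of_orthonormal_eigenbasis
    (hu : ∀ i j, u i ⬝ᵥ u j = if i = j then 1 else 0) (hM : M.IsSymm)
    (hμ : ∀ j, M *ᵥ u j = μ j • u j) (v : ι → ℝ) :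
    v ⬝ᵥ (M *ᵥ v) = ∑ j, μ j * (u j ⬝ᵥ v) ^ 2 := by
  rw [← sum_dotProduct_mul_dotProduct_of_orthonormal hu v (M *ᵥ v)]
  refine sum_congr rfl fun j _ => ?_
  rw [← hM.eq, dotProduct_transpose_mulVec, hμ, dotProduct_smul, smul_eq_mul,
    dotProduct_comm v]
  ring

theorem sub_mul_sum_sq_le_of_orthonormal_eigenbasis
    (hu : ∀ i j, u i ⬝ᵥ u j = if i = j then 1 else 0) (hM : M.IsSymm)
    (hμ : ∀ j, M *ᵥ u j = μ j • u j) (v : ι → ℝ) (S : Finset ι) {b t : ℝ}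
    (hS : ∀ j ∈ S, t ≤ μ j) (hb : ∀ j ∉ S, b ≤ μ j ∨ u j ⬝ᵥ v = 0) :
    (t - b) * ∑ j ∈ S, (u j ⬝ᵥ v) ^ 2 ≤ v ⬝ᵥ (M *ᵥ v) - b * (v ⬝ᵥ v) := by
  rw [dotProduct_mulVec_eq_sum_of_orthonormal_eigenbasis hu hM hμ,
    ← sum_dotProduct_sq_of_orthonormal hu v, mul_sum, mul_sum, ← sum_sub_distrib]
  calc ∑ j ∈ S, (t - b) * (u j ⬝ᵥ v) ^ 2 ≤ ∑ j ∈ S, (μ j - b) * (u j ⬝ᵥ v) ^ 2 :=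
        sum_le_sum fun j hj => by gcongr; linarith [hS j hj]
    _ ≤ ∑ j, (μ j - b) * (u j ⬝ᵥ v) ^ 2 :=
        sum_le_sum_of_subset_of_nonneg (subset_univ S) fun j _ hj => by
          rcases hb j hj with h | h
          · exact mul_nonneg (sub_nonneg.2 h) (sq_nonneg _)
          · simp [h]
    _ = ∑ j, (μ j * (u j ⬝ᵥ v) ^ 2 - b * (u j ⬝ᵥ v) ^ 2) :=
        sum_congr rfl fun j _ => by ring

theorem mul_dotProduct_self_le_of_orthonormal_eigenbasis
    (hu : ∀ i j, u i ⬝ᵥ u j = if i = j then 1 else 0) (hM : M.IsSymm)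
    (hμ : ∀ j, M *ᵥ u j = μ j • u j) (v : ι → ℝ) {b : ℝ}
    (hb : ∀ j, b ≤ μ j ∨ u j ⬝ᵥ v = 0) :
    b * (v ⬝ᵥ v) ≤ v ⬝ᵥ (M *ᵥ v) := by
  have := sub_mul_sum_sq_le_of_orthonormal_eigenbasis hu hM hμ v ∅ (t := 0) (by simp)
    fun j _ => hb j
  simp only [sum_empty, mul_zero] at this
  linarith

end Orthonormal

theorem IsWeightedGraph.isSymm_lap {N : ℕ} {W : Matrix (Fin N) (Fin N) ℝ}
    (hW : IsWeightedGraph W) : (lap W).IsSymm :=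
  (isSymm_diagonal _).sub (IsSymm.ext fun i j => hW.1 j i)

theorem IsCoarsening.mul_transpose_self {n N : ℕ} {C : Matrix (Fin n) (Fin N) ℝ}
    (hC : IsCoarsening C) : C * Cᵀ = 1 := by
  obtain ⟨φ, hφ, hCφ⟩ := hC
  ext a b
  simp only [mul_apply, transpose_apply, one_apply, hCφ, ite_zero_mul_ite_zero]
  split_ifs with hab
  · subst hab
    have hpos : (0 : ℝ) < #{j | φ j = a} := by
      obtain ⟨j, hj⟩ := hφ a
      exact_mod_cast card_pos.2 ⟨j, by simp [hj]⟩
    rw [← sum_filter, sum_const, nsmul_eq_mul, filter_congr fun j _ => and_self_iff,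
      ← mul_inv, Real.mul_self_sqrt hpos.le, mul_inv_cancel₀ hpos.ne']
  · exact sum_eq_zero fun j _ => if_neg fun h => hab (h.1.symm.trans h.2)

section Coarsening

variable {ι κ : Type*} [Fintype ι] [Fintype κ] {C : Matrix κ ι ℝ} {L : Matrix ι ι ℝ}

theorem dotProduct_mul_mul_transpose_mulVec (v : κ → ℝ) : v ⬝ᵥ ((C * L * Cᵀ) *ᵥ v) = (Cᵀ *ᵥ v) ⬝ᵥ (L *ᵥ (Cᵀ *ᵥ v)) := by
  rw [← mulVec_mulVec, ← mulVec_mulVec, dotProduct_mulVec, mulVec_transpose]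

variable [DecidableEq ι]

theorem dotProduct_mulVec_eq_zero_of_fixed {x : ι → ι → ℝ}
    (hx : ∀ i j, x i ⬝ᵥ x j = if i = j then 1 else 0) {i₀ : ι} {v : κ → ℝ}
    (hfix : (Cᵀ * C) *ᵥ x i₀ = x i₀) (hCx : C *ᵥ x i₀ = v) {i : ι} (hi : i ≠ i₀) :
    v ⬝ᵥ (C *ᵥ x i) = 0 := by
  rw [← hCx, ← dotProduct_transpose_mulVec, mulVec_mulVec, hfix, hx, if_neg hi]

variable [DecidableEq κ]

theorem transpose_mulVec_dotProduct_self (hCC : C * Cᵀ = 1) (v : κ → ℝ) :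
    (Cᵀ *ᵥ v) ⬝ᵥ (Cᵀ *ᵥ v) = v ⬝ᵥ v := by
  simpa [hCC] using (dotProduct_mul_mul_transpose_mulVec (C := C) (L := 1) v).symm

/-- Every eigenvector `x̃_j` other than `x̃_{j₀} = C x_{i₀}` lifts to a unit vector `Cᵀ x̃_j`
orthogonal to `x_{i₀}`, whose Rayleigh quotient for `L` is `λ̃_j`. -/
theorem le_eigenvalue_mul_mul_transpose (hCC : C * Cᵀ = 1) (hL : L.IsSymm)
    {x : ι → ι → ℝ} {lam : ι → ℝ} (hx : ∀ i j, x i ⬝ᵥ x j = if i = j then 1 else 0)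
    (heig : ∀ i, L *ᵥ x i = lam i • x i)
    {xt : κ → κ → ℝ} {lamt : κ → ℝ} (hxt : ∀ i j, xt i ⬝ᵥ xt j = if i = j then 1 else 0)
    (heigt : ∀ j, (C * L * Cᵀ) *ᵥ xt j = lamt j • xt j)
    {i₀ : ι} {j₀ j : κ} (hCx : C *ᵥ x i₀ = xt j₀) (hj : j ≠ j₀)
    {b : ℝ} (hb : ∀ i ≠ i₀, b ≤ lam i) : b ≤ lamt j := by
  set w := Cᵀ *ᵥ xt j
  have hw : w ⬝ᵥ w = 1 := by rw [transpose_mulVec_dotProduct_self hCC, hxt, if_pos rfl]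
  have horth : x i₀ ⬝ᵥ w = 0 := by
    rw [dotProduct_transpose_mulVec, hCx, hxt, if_neg hj]
  have hq : w ⬝ᵥ (L *ᵥ w) = lamt j := by
    rw [← dotProduct_mul_mul_transpose_mulVec, heigt, dotProduct_smul, hxt, if_pos rfl,
      smul_eq_mul, mul_one]
  have := mul_dotProduct_self_le_of_orthonormal_eigenbasis hx hL heig w (b := b) fun i =>
    if hi : i = i₀ then Or.inr (hi ▸ horth) else Or.inl (hb i hi)
  rwa [hw, mul_one, hq] at this

theorem sub_mul_sum_sq_coarsened_le (hCC : C * Cᵀ = 1) (hL : L.IsSymm)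
    {xt : κ → κ → ℝ} {lamt : κ → ℝ} (hxt : ∀ i j, xt i ⬝ᵥ xt j = if i = j then 1 else 0)
    (heigt : ∀ j, (C * L * Cᵀ) *ᵥ xt j = lamt j • xt j) (y : ι → ℝ) (S : Finset κ)
    {b t : ℝ} (hS : ∀ j ∈ S, t ≤ lamt j) (hb : ∀ j ∉ S, b ≤ lamt j ∨ xt j ⬝ᵥ (C *ᵥ y) = 0) :
    (t - b) * ∑ j ∈ S, (xt j ⬝ᵥ (C *ᵥ y)) ^ 2 ≤
      ((Cᵀ * C) *ᵥ y) ⬝ᵥ (L *ᵥ ((Cᵀ * C) *ᵥ y)) - b * (((Cᵀ * C) *ᵥ y) ⬝ᵥ ((Cᵀ * C) *ᵥ y)) := by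
  have hM : (C * L * Cᵀ).IsSymm := by
    simp only [IsSymm, transpose_mul, transpose_transpose, hL.eq, Matrix.mul_assoc]
  have := sub_mul_sum_sq_le_of_orthonormal_eigenbasis hxt hM heigt (C *ᵥ y) S hS hb
  rwa [dotProduct_mul_mul_transpose_mulVec, ← transpose_mulVec_dotProduct_self hCC (C *ᵥ y),
    mulVec_mulVec] at this

end Coarsening

/-- Indices are 0-based: the paper's `k` is `kk + 1`, `λ_2` is `lam ⟨1, _⟩` and `λ̃_{k+1}` is
`lamt ⟨kk + 1, _⟩`. -/
theorem coarsening_sin_theta_bound_two {n N : ℕ} (hn : n ≤ N)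
    (W : Matrix (Fin N) (Fin N) ℝ) (hW : IsWeightedGraph W)
    (C : Matrix (Fin n) (Fin N) ℝ) (hC : IsCoarsening C)
    (lam : Fin N → ℝ) (x : Fin N → Fin N → ℝ)
    (hmono : Monotone lam)
    (hortho : ∀ i j, x i ⬝ᵥ x j = if i = j then (1 : ℝ) else 0)
    (heig : ∀ i, lap W *ᵥ x i = lam i • x i)
    (lamt : Fin n → ℝ) (xt : Fin n → Fin n → ℝ)
    (hmonot : Monotone lamt)
    (horthot : ∀ i j, xt i ⬝ᵥ xt j = if i = j then (1 : ℝ) else 0)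
    (heigt : ∀ i, (C * lap W * Cᵀ) *ᵥ xt i = lamt i • xt i)
    (kk : ℕ) (hkn : kk + 2 ≤ n)
    (hfix : (Cᵀ * C) *ᵥ x ⟨0, by omega⟩ = x ⟨0, by omega⟩)
    (hCx1 : C *ᵥ x ⟨0, by omega⟩ = xt ⟨0, by omega⟩)
    (eps : Fin N → ℝ)
    (hrss : ∀ i : Fin N, 1 ≤ (i : ℕ) → (i : ℕ) ≤ kk →
      ((Cᵀ * C) *ᵥ x i) ⬝ᵥ (lap W *ᵥ ((Cᵀ * C) *ᵥ x i)) ≤ (1 + eps i) * lam i)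
    (hgap : lam ⟨1, by omega⟩ < lamt ⟨kk + 1, by omega⟩) :
    (∑ i ∈ Finset.univ.filter (fun i : Fin N => (i : ℕ) ≤ kk),
        ∑ j ∈ Finset.univ.filter (fun j : Fin n => kk < (j : ℕ)),
          (xt j ⬝ᵥ (C *ᵥ x i)) ^ 2)
      ≤ ∑ i ∈ Finset.univ.filter (fun i : Fin N => 1 ≤ (i : ℕ) ∧ (i : ℕ) ≤ kk),
          ((1 + eps i) * lam i -
            lam ⟨1, by omega⟩ * (((Cᵀ * C) *ᵥ x i) ⬝ᵥ ((Cᵀ * C) *ᵥ x i))) /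
          (lamt ⟨kk + 1, by omega⟩ - lam ⟨1, by omega⟩) := by
  have hL := hW.isSymm_lap
  have hCC := hC.mul_transpose_self
  have hlamt : ∀ j : Fin n, j ≠ ⟨0, by omega⟩ → lam ⟨1, by omega⟩ ≤ lamt j := fun j hj =>
    le_eigenvalue_mul_mul_transpose hCC hL hortho heig horthot heigt hCx1 hj fun i hi =>
      hmono (Fin.mk_le_of_le_val (by simpa [Fin.ext_iff, Nat.one_le_iff_ne_zero] using hi))
  rw [sum_filter, sum_filter]
  refine sum_le_sum fun i _ => ?_
  split_ifs with h₁ h₂ h₂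
  · have hi : i ≠ ⟨0, by omega⟩ := by simp [Fin.ext_iff]; omega
    rw [le_div_iff₀ (sub_pos.2 hgap), mul_comm]
    refine (sub_mul_sum_sq_coarsened_le hCC hL horthot heigt (x i) _
      (fun j hj => hmonot (Fin.mk_le_of_le_val (by simpa using hj))) fun j _ => ?_).trans
      (by linarith [hrss i h₂.1 h₂.2])
    by_cases hj0 : j = ⟨0, by omega⟩
    · exact Or.inr (hj0 ▸ dotProduct_mulVec_eq_zero_of_fixed hortho hfix hCx1 hi)
    · exact Or.inl (hlamt j hj0)
  · rw [show i = ⟨0, by omega⟩ by simp [Fin.ext_iff]; omega]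
    refine (sum_eq_zero fun j hj => ?_).le
    rw [hCx1, horthot, if_neg (by simp [Fin.ext_iff] at hj ⊢; omega)]
    norm_num
  · omega
  · exact le_rfl
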